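/- Let X be a compact Hausdorff space and let A be a closed subalgebra of C(X,ℂ) containing the constants and separating the points of X. Suppose that the maximal ideal space of A is X, i.e., every nonzero continuous ℂ-algebra homomorphism A → ℂ is given by evaluation at some point of X. Then for every point p ∈ X and every open neighborhood U of p there exists a closed set V ⊆ U that is a neighborhood of p such that every nonzero continuous ℂ-algebra homomorphism from the closure in C(V,ℂ) of { f|_V : f ∈ A } to ℂ is given by evaluation at some point of V. -/

import Mathlib

/-!
Around `p`, cut out `V` as a finite intersection of sublevel sets `{x | ‖g x‖ ≤ c}` of functions
`g ∈ A` vanishing at `p`: for each `y ∉ U` separation gives such a `g` with `g y ≠ 0`, and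
compactness of `Uᶜ` makes finitely many of them suffice. Such a `V` is `A`-convex. A continuous
character of the closure of `A|_V` pulls back to a character of `A`, hence is evaluation at some
`x ∈ X`; as characters have norm at most one, `‖g x‖ ≤ sup_V ‖g‖` for every `g ∈ A`, so `x ∈ V`
by convexity, and density of `A|_V` shows the character is evaluation at `x`.
-/

/-- Restriction to a subset, as an algebra homomorphism `C(X, ℂ) →ₐ[ℂ] C(V, ℂ)`. -/
noncomputable def restrictHom {X : Type*} [TopologicalSpace X] (V : Set X) :
    C(X, ℂ) →ₐ[ℂ] C(V, ℂ) where
  toFun f := f.restrict V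
  map_one' := rfl
  map_mul' _ _ := rfl
  map_zero' := rfl
  map_add' _ _ := rfl
  commutes' _ := rfl

open Filter Topology

section HullConvex

variable {X : Type*} [TopologicalSpace X]

/-- `V` is `A`-convex: it contains every point `x` with `‖f x‖ ≤ sup_V ‖f‖` for all `f ∈ A`. -/
def IsHullConvex (A : Subalgebra ℂ C(X, ℂ)) (V : Set X) : Prop :=
  ∀ x, (∀ f ∈ A, ∀ r : ℝ, (∀ v ∈ V, ‖f v‖ ≤ r) → ‖f x‖ ≤ r) → x ∈ V

namespace IsHullConvex

variable {A : Subalgebra ℂ C(X, ℂ)}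

theorem setOf_norm_le {f : C(X, ℂ)} (hf : f ∈ A) (r : ℝ) :
    IsHullConvex A {x | ‖f x‖ ≤ r} :=
  fun _ hx => hx f hf r fun _ hv => hv

theorem iInter {ι : Sort*} {V : ι → Set X} (hV : ∀ i, IsHullConvex A (V i)) :
    IsHullConvex A (⋂ i, V i) :=
  fun x hx => Set.mem_iInter.2 fun i => hV i x fun f hf r hr =>
    hx f hf r fun v hv => hr v (Set.mem_iInter.1 hv i)

theorem exists_eval_eq {V : Set X} [CompactSpace V] (hV : IsHullConvex A V)
    (hmax : ∀ φ : A →ₐ[ℂ] ℂ, Continuous φ → ∃ x : X, ∀ f : A, φ f = (f : C(X, ℂ)) x)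
    (ψ : (A.map (restrictHom V)).topologicalClosure →ₐ[ℂ] ℂ) (hψ : Continuous ψ) :
    ∃ v : V, ∀ f : (A.map (restrictHom V)).topologicalClosure, ψ f = (f : C(V, ℂ)) v := by
  let S := A.map (restrictHom V)
  -- a character cannot live on the zero algebra; nonemptiness of `V` gives `‖1‖ = 1` below
  have : Nonempty V := by
    have := ψ.toRingHom.domain_nontrivial
    have := Subtype.val_injective.nontrivial (f := ((↑) : S.topologicalClosure → C(V, ℂ)))
    by_contra h
    rw [not_nonempty_iff] at h
    exact not_subsingleton C(V, ℂ) inferInstance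
  have : CompleteSpace S.topologicalClosure := S.isClosed_topologicalClosure.completeSpace_coe
  have : NormOneClass S.topologicalClosure := ⟨norm_one (α := C(V, ℂ))⟩
  let ρ : A →ₐ[ℂ] S.topologicalClosure :=
    ((restrictHom V).comp A.val).codRestrict _ fun a => S.le_topologicalClosure ⟨a, a.2, rfl⟩
  have hρ : Continuous ρ :=
    ((ContinuousMap.continuous_restrict V).comp continuous_subtype_val).subtype_mk _
  obtain ⟨x, hx⟩ := hmax (ψ.comp ρ) (hψ.comp hρ)
  have hxV : x ∈ V := hV x fun f hf r hr => calc
    ‖f x‖ = ‖ψ (ρ ⟨f, hf⟩)‖ := by rw [← hx ⟨f, hf⟩]; rfl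
    _ ≤ ‖ρ ⟨f, hf⟩‖ := AlgHom.norm_apply_le_self ψ _
    _ ≤ r := (ContinuousMap.norm_le_of_nonempty _).2 fun v => hr v v.2
  have hdense : DenseRange (Set.inclusion S.le_topologicalClosure) :=
    (denseRange_inclusion_iff _).2 S.topologicalClosure_coe.subset
  refine ⟨⟨x, hxV⟩, fun f => congrFun (hdense.equalizer hψ
    (continuous_eval_const _ |>.comp continuous_subtype_val) ?_) f⟩
  funext ⟨_, a, ha, rfl⟩
  exact hx ⟨a, ha⟩

end IsHullConvex

theorem exists_isClosed_isHullConvex_mem_nhds_subset [CompactSpace X]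
    {A : Subalgebra ℂ C(X, ℂ)} (hsep : ∀ x y : X, x ≠ y → ∃ f ∈ A, f x ≠ f y)
    {p : X} {U : Set X} (hU : IsOpen U) (hpU : p ∈ U) :
    ∃ V, IsClosed V ∧ IsHullConvex A V ∧ V ⊆ U ∧ V ∈ 𝓝 p := by
  have hvanish : ∀ y ∈ Uᶜ, ∃ g ∈ A, g p = 0 ∧ g y ≠ 0 := by
    intro y hy
    obtain ⟨f, hfA, hf⟩ := hsep y p (ne_of_mem_of_not_mem hpU hy).symm
    exact ⟨f - algebraMap ℂ C(X, ℂ) (f p), sub_mem hfA (A.algebraMap_mem _), by simp,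
      by simpa [sub_eq_zero] using hf⟩
  choose! g hgA hgp hgy using hvanish
  -- the threshold `c y` lies strictly between `‖g y p‖ = 0` and `‖g y y‖`
  let c y := ‖g y y‖ / 2
  obtain ⟨t, htU, hcover⟩ := hU.isClosed_compl.isCompact.elim_nhds_subcover
    (fun y => {x | c y < ‖g y x‖}) fun y hy =>
      continuousAt_const.eventually_lt (g y).continuous.norm.continuousAt
        (half_lt_self (norm_pos_iff.2 (hgy y hy)))
  refine ⟨⋂ y ∈ t, {x | ‖g y x‖ ≤ c y}, ?_, ?_, ?_, ?_⟩
  · exact isClosed_biInter fun y _ => isClosed_le (g y).continuous.norm continuous_const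
  · exact IsHullConvex.iInter fun y => IsHullConvex.iInter fun hy =>
      IsHullConvex.setOf_norm_le (hgA y (htU y hy)) _
  · intro x hx
    by_contra hxU
    obtain ⟨y, hyt, hyx⟩ := Set.mem_iUnion₂.1 (hcover hxU)
    have hxy : ‖g y x‖ ≤ c y := Set.mem_iInter₂.1 hx y hyt
    exact not_le.2 hyx hxy
  · refine (biInter_finset_mem t).2 fun y hy => ?_
    have hpy : ‖g y p‖ < c y := by
      rw [hgp y (htU y hy), norm_zero]
      exact half_pos (norm_pos_iff.2 (hgy y (htU y hy)))
    filter_upwards [(g y).continuous.norm.continuousAt.eventually_lt continuousAt_const hpy]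
      with x hx using hx.le

end HullConvex

theorem stmt17_general {X : Type*} [TopologicalSpace X] [CompactSpace X]
    (A : Subalgebra ℂ C(X, ℂ))
    (hsep : ∀ x y : X, x ≠ y → ∃ f ∈ A, f x ≠ f y)
    (hmax : ∀ φ : A →ₐ[ℂ] ℂ, Continuous φ → ∃ x : X, ∀ f : A, φ f = (f : C(X, ℂ)) x)
    (p : X) (U : Set X) (hU : IsOpen U) (hpU : p ∈ U) :
    ∃ V : Set X, ∃ hVcl : IsClosed V, V ⊆ U ∧ V ∈ nhds p ∧
      haveI : CompactSpace V := isCompact_iff_compactSpace.mp hVcl.isCompact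
      ∀ ψ : (A.map (restrictHom V)).topologicalClosure →ₐ[ℂ] ℂ, Continuous ψ →
        ∃ v : V, ∀ f : (A.map (restrictHom V)).topologicalClosure,
          ψ f = (f : C(V, ℂ)) v := by
  obtain ⟨V, hVcl, hVA, hVU, hVp⟩ := exists_isClosed_isHullConvex_mem_nhds_subset hsep hU hpU
  have : CompactSpace V := isCompact_iff_compactSpace.mp hVcl.isCompact
  exact ⟨V, hVcl, hVU, hVp, fun ψ hψ => hVA.exists_eval_eq hmax ψ hψ⟩

theorem stmt17 {X : Type*} [TopologicalSpace X] [CompactSpace X] [T2Space X]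
    (A : Subalgebra ℂ C(X, ℂ)) (hAcl : IsClosed (A : Set C(X, ℂ)))
    (hsep : ∀ x y : X, x ≠ y → ∃ f ∈ A, f x ≠ f y)
    (hmax : ∀ φ : A →ₐ[ℂ] ℂ, Continuous φ → ∃ x : X, ∀ f : A, φ f = (f : C(X, ℂ)) x)
    (p : X) (U : Set X) (hU : IsOpen U) (hpU : p ∈ U) :
    ∃ V : Set X, ∃ hVcl : IsClosed V, V ⊆ U ∧ V ∈ nhds p ∧
      haveI : CompactSpace V := isCompact_iff_compactSpace.mp hVcl.isCompact
      ∀ ψ : (A.map (restrictHom V)).topologicalClosure →ₐ[ℂ] ℂ, Continuous ψ →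
        ∃ v : V, ∀ f : (A.map (restrictHom V)).topologicalClosure,
          ψ f = (f : C(V, ℂ)) v :=
  stmt17_general A hsep hmax p U hU hpU
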